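/- Let r > 0 and let differentiable functions v¹, v², v³ : ℝ → ℝ solve the circular-tractrix ODE system with parameter r together with the unit-length constraint (v¹(s))² + (v²(s))² + (v³(s))² = 1 for all s. Let a, b be nonzero real constants and let f : ℝ² → ℝ⁴ be the generalized Dini surface built from (v¹, v², v³, r, a, b). Define u : ℝ² → ℝ⁴ by u(s,φ) = R(φ)·ŵ(s), where ŵ(s) = (−v¹(s)·sin(s/r) − v²(s)·cos(s/r), v¹(s)·cos(s/r) − v²(s)·sin(s/r), v³(s), 0). Then for all (s,φ) ∈ ℝ²: ‖u(s,φ)‖ = 1, ∂f/∂s(s,φ) = v¹(s)·u(s,φ) (so u is tangent to the meridian through the point when v¹(s) ≠ 0), and f(s,φ) − u(s,φ) = (r·cos(s/r + aφ), r·sin(s/r + aφ), 0, 0); in particular the endpoints of the unit segments u drawn from the points of the surface all lie on the circle of radius r centered at the origin in the x¹x²-coordinate plane of ℝ⁴. -/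

import Mathlib

/-- The circular-tractrix ODE system with parameter `r`. -/
def SolvesCircularTractrix (r : ℝ) (v1 v2 v3 : ℝ → ℝ) : Prop :=
  (∀ s : ℝ, HasDerivAt v1 ((1 / r) * v2 s + (v1 s) ^ 2 - 1) s) ∧
  (∀ s : ℝ, HasDerivAt v2 (-(1 / r) * v1 s + v1 s * v2 s) s) ∧
  (∀ s : ℝ, HasDerivAt v3 (v1 s * v3 s) s)

/-- The block-diagonal skew-rotation matrix `R(φ)` with angles `aφ` and `bφ`. -/
noncomputable def skewRot (a b φ : ℝ) : Matrix (Fin 4) (Fin 4) ℝ :=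
  !![Real.cos (a * φ), -Real.sin (a * φ), 0, 0;
     Real.sin (a * φ),  Real.cos (a * φ), 0, 0;
     0, 0, Real.cos (b * φ), -Real.sin (b * φ);
     0, 0, Real.sin (b * φ),  Real.cos (b * φ)]

/-- The generalized Dini surface built from functions `v1, v2, v3`, radius `r`
and screw-rotation constants `a, b`: `f(s,φ) = R(φ)·c(s)`. -/
noncomputable def diniSurface (v1 v2 v3 : ℝ → ℝ) (r a b : ℝ) :
    ℝ → ℝ → EuclideanSpace ℝ (Fin 4) :=
  fun s φ => (WithLp.equiv 2 (Fin 4 → ℝ)).symm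
    ((skewRot a b φ).mulVec
      ![r * Real.cos (s / r) - v1 s * Real.sin (s / r) - v2 s * Real.cos (s / r),
        r * Real.sin (s / r) + v1 s * Real.cos (s / r) - v2 s * Real.sin (s / r),
        v3 s, 0])

/-!
The profile curve splits as `c(s) = (r cos(s/r), r sin(s/r), 0, 0) + ŵ(s)`, and the tractrix
equations are exactly what makes `c' = v¹ ŵ`. The first two coordinates of `ŵ` are
`(−v², v¹)` rotated by the angle `s/r`, so `‖ŵ‖ = ‖(v¹, v², v³)‖ = 1`. Since `R(φ)` is a
rotation independent of `s`, it preserves norms and commutes with `d/ds`, and on the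
`x¹x²`-plane it adds `aφ` to the polar angle.
-/

open Real Matrix

theorem skewRot_mulVec (a b φ x₀ x₁ x₂ x₃ : ℝ) :
    skewRot a b φ *ᵥ ![x₀, x₁, x₂, x₃] =
      ![cos (a * φ) * x₀ - sin (a * φ) * x₁, sin (a * φ) * x₀ + cos (a * φ) * x₁,
        cos (b * φ) * x₂ - sin (b * φ) * x₃, sin (b * φ) * x₂ + cos (b * φ) * x₃] := by
  ext i
  fin_cases i <;> simp [skewRot, mulVec, dotProduct, Fin.sum_univ_four] <;> ring

theorem skewRot_mulVec_circle (a b φ r θ : ℝ) :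
    skewRot a b φ *ᵥ ![r * cos θ, r * sin θ, 0, 0] =
      ![r * cos (θ + a * φ), r * sin (θ + a * φ), 0, 0] := by
  rw [skewRot_mulVec, cos_add, sin_add]
  ext i
  fin_cases i <;> simp <;> ring

theorem norm_toLp_four (x₀ x₁ x₂ x₃ : ℝ) :
    ‖WithLp.toLp 2 ![x₀, x₁, x₂, x₃]‖ = √(x₀ ^ 2 + x₁ ^ 2 + x₂ ^ 2 + x₃ ^ 2) := by
  simp [EuclideanSpace.norm_eq, Fin.sum_univ_four, add_assoc]

theorem norm_toLp_skewRot_mulVec (a b φ : ℝ) (x : Fin 4 → ℝ) :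
    ‖WithLp.toLp 2 (skewRot a b φ *ᵥ x)‖ = ‖WithLp.toLp 2 x‖ := by
  simp only [EuclideanSpace.norm_eq, Real.norm_eq_abs, sq_abs, Fin.sum_univ_four]
  congr 1
  simp [skewRot, mulVec, dotProduct, Fin.sum_univ_four]
  linear_combination (x 0 ^ 2 + x 1 ^ 2) * sin_sq_add_cos_sq (a * φ) +
    (x 2 ^ 2 + x 3 ^ 2) * sin_sq_add_cos_sq (b * φ)

theorem HasDerivAt.toLp_mulVec {m n : Type*} [Fintype m] [Fintype n] (A : Matrix m n ℝ)
    {c : ℝ → n → ℝ} {c' : n → ℝ} {t : ℝ} (hc : HasDerivAt c c' t) :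
    HasDerivAt (fun t => WithLp.toLp 2 (A *ᵥ c t)) (WithLp.toLp 2 (A *ᵥ c')) t := by
  have hA := (mulVecLin A).toContinuousLinearMap.hasFDerivAt.comp_hasDerivAt t hc
  exact ((PiLp.continuousLinearEquiv 2 ℝ (fun _ : m => ℝ)).symm :
    (m → ℝ) →L[ℝ] EuclideanSpace ℝ m).hasFDerivAt.comp_hasDerivAt t hA

section DiniSurface

variable (v1 v2 v3 : ℝ → ℝ) (r : ℝ)

noncomputable def diniProfile (s : ℝ) : Fin 4 → ℝ :=
  ![r * cos (s / r) - v1 s * sin (s / r) - v2 s * cos (s / r),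
    r * sin (s / r) + v1 s * cos (s / r) - v2 s * sin (s / r),
    v3 s, 0]

noncomputable def meridianDirection (s : ℝ) : Fin 4 → ℝ :=
  ![-(v1 s) * sin (s / r) - v2 s * cos (s / r),
    v1 s * cos (s / r) - v2 s * sin (s / r),
    v3 s, 0]

theorem diniSurface_eq_toLp_skewRot_mulVec (a b s φ : ℝ) :
    diniSurface v1 v2 v3 r a b s φ = WithLp.toLp 2 (skewRot a b φ *ᵥ diniProfile v1 v2 v3 r s) :=
  rfl

theorem diniProfile_sub_meridianDirection (s : ℝ) :
    diniProfile v1 v2 v3 r s - meridianDirection v1 v2 v3 r s =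
      ![r * cos (s / r), r * sin (s / r), 0, 0] := by
  ext i
  fin_cases i <;> simp [diniProfile, meridianDirection]

theorem norm_toLp_meridianDirection (s : ℝ) :
    ‖WithLp.toLp 2 (meridianDirection v1 v2 v3 r s)‖ = √(v1 s ^ 2 + v2 s ^ 2 + v3 s ^ 2) := by
  rw [meridianDirection, norm_toLp_four]
  congr 1
  linear_combination (v1 s ^ 2 + v2 s ^ 2) * sin_sq_add_cos_sq (s / r)

variable {v1 v2 v3 r}

theorem hasDerivAt_diniProfile (hsol : SolvesCircularTractrix r v1 v2 v3) (hr : r ≠ 0) (s : ℝ) :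
    HasDerivAt (diniProfile v1 v2 v3 r) (v1 s • meridianDirection v1 v2 v3 r s) s := by
  obtain ⟨h1, h2, h3⟩ := hsol
  have hdiv : HasDerivAt (fun t : ℝ => t / r) (1 / r) s := (hasDerivAt_id s).div_const r
  have hsin : HasDerivAt (fun t => sin (t / r)) (cos (s / r) * (1 / r)) s := hdiv.sin
  have hcos : HasDerivAt (fun t => cos (t / r)) (-sin (s / r) * (1 / r)) s := hdiv.cos
  rw [hasDerivAt_pi]
  intro i
  fin_cases i
  · refine (((hcos.const_mul r).sub ((h1 s).mul hsin)).sub ((h2 s).mul hcos)).congr_deriv ?_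
    simp only [meridianDirection, Pi.smul_apply, smul_eq_mul, Fin.zero_eta, cons_val_zero]
    field_simp
    ring
  · refine (((hsin.const_mul r).add ((h1 s).mul hcos)).sub ((h2 s).mul hsin)).congr_deriv ?_
    simp only [meridianDirection, Pi.smul_apply, smul_eq_mul, Fin.mk_one, cons_val_one,
      cons_val_zero]
    field_simp
    ring
  · simpa [diniProfile, meridianDirection] using h3 s
  · simpa [diniProfile, meridianDirection] using hasDerivAt_const s (0 : ℝ)

end DiniSurface

theorem stmt19_general (r a b : ℝ) (hr : 0 < r)
    (v1 v2 v3 : ℝ → ℝ)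
    (hsol : SolvesCircularTractrix r v1 v2 v3)
    (hunit : ∀ s : ℝ, (v1 s) ^ 2 + (v2 s) ^ 2 + (v3 s) ^ 2 = 1)
    (f u : ℝ → ℝ → EuclideanSpace ℝ (Fin 4))
    (hf : f = diniSurface v1 v2 v3 r a b)
    (hu : ∀ s φ : ℝ, u s φ = (WithLp.equiv 2 (Fin 4 → ℝ)).symm
      ((skewRot a b φ).mulVec
        ![-(v1 s) * Real.sin (s / r) - v2 s * Real.cos (s / r),
          v1 s * Real.cos (s / r) - v2 s * Real.sin (s / r),
          v3 s, 0])) :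
    ∀ s φ : ℝ,
      ‖u s φ‖ = 1 ∧
      HasDerivAt (fun t => f t φ) (v1 s • u s φ) s ∧
      f s φ - u s φ = (WithLp.equiv 2 (Fin 4 → ℝ)).symm
        ![r * Real.cos (s / r + a * φ), r * Real.sin (s / r + a * φ), 0, 0] := by
  intro s φ
  have hu' : u s φ = WithLp.toLp 2 (skewRot a b φ *ᵥ meridianDirection v1 v2 v3 r s) := hu s φ
  subst hf
  refine ⟨?_, ?_, ?_⟩
  · rw [hu', norm_toLp_skewRot_mulVec, norm_toLp_meridianDirection, hunit, sqrt_one]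
  · rw [hu', ← WithLp.toLp_smul, ← mulVec_smul]
    exact (hasDerivAt_diniProfile hsol hr.ne' s).toLp_mulVec _
  · rw [hu', diniSurface_eq_toLp_skewRot_mulVec, ← WithLp.toLp_sub, ← mulVec_sub,
      diniProfile_sub_meridianDirection, skewRot_mulVec_circle]
    rfl

theorem stmt19 (r a b : ℝ) (hr : 0 < r) (ha : a ≠ 0) (hb : b ≠ 0)
    (v1 v2 v3 : ℝ → ℝ)
    (hsol : SolvesCircularTractrix r v1 v2 v3)
    (hunit : ∀ s : ℝ, (v1 s) ^ 2 + (v2 s) ^ 2 + (v3 s) ^ 2 = 1)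
    (f u : ℝ → ℝ → EuclideanSpace ℝ (Fin 4))
    (hf : f = diniSurface v1 v2 v3 r a b)
    (hu : ∀ s φ : ℝ, u s φ = (WithLp.equiv 2 (Fin 4 → ℝ)).symm
      ((skewRot a b φ).mulVec
        ![-(v1 s) * Real.sin (s / r) - v2 s * Real.cos (s / r),
          v1 s * Real.cos (s / r) - v2 s * Real.sin (s / r),
          v3 s, 0])) :
    ∀ s φ : ℝ,
      ‖u s φ‖ = 1 ∧
      HasDerivAt (fun t => f t φ) (v1 s • u s φ) s ∧
      f s φ - u s φ = (WithLp.equiv 2 (Fin 4 → ℝ)).symm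
        ![r * Real.cos (s / r + a * φ), r * Real.sin (s / r + a * φ), 0, 0] :=
  stmt19_general r a b hr v1 v2 v3 hsol hunit f u hf hu
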